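/- If a sequence {P_i} of convex bodies in ℝⁿ satisfies W₂(m_{P_i}, m_Q) → 0 for a convex body Q, then vol(P_i △ Q) → 0, i.e., P_i → Q in the symmetric-difference volume distance. -/

import Mathlib

open MeasureTheory Filter Topology Metric
open scoped RealInnerProductSpace ENNReal

/-- Euclidean space `ℝⁿ`. -/
abbrev Euc (n : ℕ) := EuclideanSpace ℝ (Fin n)

/-- A convex body in `ℝⁿ`: a compact convex set with nonempty interior. -/
def IsConvexBody {n : ℕ} (C : Set (Euc n)) : Prop :=
  Convex ℝ C ∧ IsCompact C ∧ (interior C).Nonempty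

/-- The normalized uniform (Lebesgue) probability measure on a set `C`. -/
noncomputable def unifMeasure {n : ℕ} (C : Set (Euc n)) : Measure (Euc n) :=
  (volume C)⁻¹ • volume.restrict C

/-- The optimal transport cost (squared `L²`-Wasserstein distance), as an
infimum over couplings of the integral of the squared distance. -/
noncomputable def transportCost {n : ℕ} (μ ν : Measure (Euc n)) : ℝ :=
  sInf { c : ℝ | ∃ ξ : Measure (Euc n × Euc n),
    ξ.map Prod.fst = μ ∧ ξ.map Prod.snd = ν ∧ c = ∫ p, dist p.1 p.2 ^ 2 ∂ξ }

/-- The `L²`-Wasserstein distance. -/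
noncomputable def W2 {n : ℕ} (μ ν : Measure (Euc n)) : ℝ :=
  Real.sqrt (transportCost μ ν)

/-- The support of a measure: points all of whose neighborhoods have positive measure. -/
def msupport {n : ℕ} (μ : Measure (Euc n)) : Set (Euc n) :=
  {x | ∀ U ∈ nhds x, μ U ≠ 0}


/-!
Choose couplings `ξᵢ` of `m_{Pᵢ}` and `m_Q` whose costs `∫ |x - y|² dξᵢ` tend to `0`.

`Pᵢ \ Q` is small: by Markov's inequality the `m_{Pᵢ}`-mass farther than `r` from `Q` is at most
`cost / r²`, so `vol (Pᵢ \ Q) ≤ vol (Pᵢ \ Q_r) + vol (Q_r \ Q)` with `Q_r` the closed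
`r`-thickening, and both terms can be made small.

`Q \ Pᵢ` is small: if a point `x` with `B(x, δ) ⊆ Q` were missing from the convex set `Pᵢ`, a
hyperplane through `x` would separate `Pᵢ` by `δ / 4` from a ball `B ⊆ Q` of radius `δ / 4`,
which carries `m_Q`-mass `vol B / vol Q`, forcing `cost ≥ (δ / 4)² vol B / vol Q`. Hence for small
cost `Pᵢ` contains the homothetic copy `c + t (Q - c)` (`c` an interior point, `t < 1`), whose
complement in `Q` has volume `(1 - tⁿ) vol Q`.
-/

open Set

section Coupling

variable {X Y : Type*} [MeasurableSpace X] [MeasurableSpace Y]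

def IsCoupling (ξ : Measure (X × Y)) (μ : Measure X) (ν : Measure Y) : Prop :=
  ξ.map Prod.fst = μ ∧ ξ.map Prod.snd = ν

namespace IsCoupling

variable {ξ : Measure (X × Y)} {μ : Measure X} {ν : Measure Y}

lemma apply_univ_prod (h : IsCoupling ξ μ ν) {t : Set Y} (ht : MeasurableSet t) :
    ξ (univ ×ˢ t) = ν t := by
  rw [univ_prod, ← Measure.map_apply measurable_snd ht, h.2]

lemma apply_prod_univ (h : IsCoupling ξ μ ν) {s : Set X} (hs : MeasurableSet s) :
    ξ (s ×ˢ univ) = μ s := by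
  rw [prod_univ, ← Measure.map_apply measurable_fst hs, h.1]

lemma isProbabilityMeasure (h : IsCoupling ξ μ ν) [IsProbabilityMeasure μ] :
    IsProbabilityMeasure ξ :=
  ⟨by simpa using h.apply_prod_univ MeasurableSet.univ⟩

lemma ae_fst (h : IsCoupling ξ μ ν) {p : X → Prop} (hp : ∀ᵐ x ∂μ, p x) :
    ∀ᵐ z ∂ξ, p z.1 :=
  ae_of_ae_map measurable_fst.aemeasurable (h.1 ▸ hp)

lemma ae_snd (h : IsCoupling ξ μ ν) {p : Y → Prop} (hp : ∀ᵐ y ∂ν, p y) :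
    ∀ᵐ z ∂ξ, p z.2 :=
  ae_of_ae_map measurable_snd.aemeasurable (h.2 ▸ hp)

end IsCoupling

lemma isCoupling_prod (μ : Measure X) (ν : Measure Y) [IsProbabilityMeasure μ]
    [IsProbabilityMeasure ν] : IsCoupling (μ.prod ν) μ ν := by
  simp [IsCoupling]

end Coupling

section SqDistCost

variable {E : Type*} [PseudoMetricSpace E] [MeasurableSpace E]

noncomputable def sqDistCost (ξ : Measure (E × E)) : ℝ :=
  ∫ z, dist z.1 z.2 ^ 2 ∂ξ

lemma sqDistCost_nonneg (ξ : Measure (E × E)) : 0 ≤ sqDistCost ξ :=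
  integral_nonneg fun _ => by positivity

variable {ξ : Measure (E × E)}

lemma sq_mul_measureReal_le_sqDistCost [IsFiniteMeasure ξ]
    (hint : Integrable (fun z : E × E => dist z.1 z.2 ^ 2) ξ) {A : Set (E × E)} {d : ℝ}
    (hd : 0 ≤ d) (hA : ∀ᵐ z ∂ξ, z ∈ A → d ≤ dist z.1 z.2) :
    d ^ 2 * ξ.real A ≤ sqDistCost ξ :=
  calc d ^ 2 * ξ.real A ≤ d ^ 2 * ξ.real {z | d ^ 2 ≤ dist z.1 z.2 ^ 2} := by
        refine mul_le_mul_of_nonneg_left (ENNReal.toReal_mono (measure_ne_top _ _) ?_) (sq_nonneg d)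
        exact measure_mono_ae (hA.mono fun z hz hzA => pow_le_pow_left₀ hd (hz hzA) 2)
    _ ≤ sqDistCost ξ :=
        mul_meas_ge_le_integral_of_nonneg (ae_of_all _ fun _ => by positivity) hint _

variable [OpensMeasurableSpace E] [SecondCountableTopology E]

lemma integrable_dist_sq_of_ae_mem [IsFiniteMeasure ξ] {s t : Set E} (hs : Bornology.IsBounded s)
    (ht : Bornology.IsBounded t) (hst : ∀ᵐ z ∂ξ, z ∈ s ×ˢ t) :
    Integrable (fun z : E × E => dist z.1 z.2 ^ 2) ξ := by
  obtain ⟨R, hR⟩ := Metric.isBounded_iff.1 (hs.union ht)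
  refine Integrable.of_bound (by fun_prop) (R ^ 2) (hst.mono fun z hz => ?_)
  have hdist := hR (Or.inl hz.1) (Or.inr hz.2)
  rw [Real.norm_of_nonneg (by positivity)]
  exact pow_le_pow_left₀ dist_nonneg hdist 2

end SqDistCost

section Transport

variable {n : ℕ}

lemma transportCost_nonneg (μ ν : Measure (Euc n)) : 0 ≤ transportCost μ ν :=
  Real.sInf_nonneg fun _ ⟨ξ, _, _, hc⟩ => hc ▸ sqDistCost_nonneg ξ

lemma exists_isCoupling_sqDistCost_lt {μ ν : Measure (Euc n)} [IsProbabilityMeasure μ]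
    [IsProbabilityMeasure ν] {c : ℝ} (h : transportCost μ ν < c) :
    ∃ ξ, IsCoupling ξ μ ν ∧ sqDistCost ξ < c := by
  have hprod := isCoupling_prod μ ν
  obtain ⟨_, ⟨ξ, h1, h2, rfl⟩, hlt⟩ :=
    exists_lt_of_csInf_lt (by exact ⟨_, _, hprod.1, hprod.2, rfl⟩) h
  exact ⟨ξ, ⟨h1, h2⟩, hlt⟩

lemma exists_isCoupling_tendsto_sqDistCost {μ : ℕ → Measure (Euc n)} {ν : Measure (Euc n)}
    [∀ i, IsProbabilityMeasure (μ i)] [IsProbabilityMeasure ν]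
    (h : Tendsto (fun i => W2 (μ i) ν) atTop (𝓝 0)) :
    ∃ ξ : ℕ → Measure (Euc n × Euc n), (∀ i, IsCoupling (ξ i) (μ i) ν) ∧
      Tendsto (fun i => sqDistCost (ξ i)) atTop (𝓝 0) := by
  have hcost : Tendsto (fun i => transportCost (μ i) ν) atTop (𝓝 0) := by
    simpa [W2, Real.sq_sqrt (transportCost_nonneg _ _)] using h.pow 2
  choose ξ hξ hlt using fun i : ℕ => exists_isCoupling_sqDistCost_lt
    (lt_add_of_pos_right (transportCost (μ i) ν) (Nat.one_div_pos_of_nat (n := i)))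
  refine ⟨ξ, hξ, squeeze_zero (fun i => sqDistCost_nonneg _) (fun i => (hlt i).le) ?_⟩
  simpa using hcost.add tendsto_one_div_add_atTop_nhds_zero_nat

end Transport

lemma exists_norm_eq_one_inner_le_of_notMem {E : Type*} [NormedAddCommGroup E]
    [InnerProductSpace ℝ E] [CompleteSpace E] {s : Set E} (hs : Convex ℝ s) (hsc : IsClosed s)
    (hne : s.Nonempty) {x : E} (hx : x ∉ s) :
    ∃ u : E, ‖u‖ = 1 ∧ ∀ p ∈ s, ⟪u, p⟫ ≤ ⟪u, x⟫ := by
  obtain ⟨f, t, hfs, htx⟩ := geometric_hahn_banach_closed_point hs hsc hx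
  set v := (InnerProductSpace.toDual ℝ E).symm f
  have hv : ∀ y, ⟪v, y⟫ = f y := fun y => InnerProductSpace.toDual_symm_apply
  obtain ⟨p₀, hp₀⟩ := hne
  have hv0 : v ≠ 0 := by
    rintro h0
    have h1 := hv p₀
    have h2 := hv x
    simp only [h0, inner_zero_left] at h1 h2
    linarith [hfs p₀ hp₀]
  refine ⟨(‖v‖⁻¹ : ℝ) • v, norm_smul_inv_norm hv0, fun p hp => ?_⟩
  simp only [real_inner_smul_left, hv]
  exact mul_le_mul_of_nonneg_left ((hfs p hp).trans htx).le (by positivity)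

lemma Convex.ball_homothety_subset {E : Type*} [NormedAddCommGroup E] [NormedSpace ℝ E]
    {Q : Set E} (hQ : Convex ℝ Q) {c q : E} {ρ t : ℝ} (hball : ball c ρ ⊆ Q) (hq : q ∈ Q)
    (ht0 : 0 ≤ t) (ht1 : t < 1) :
    ball (AffineMap.homothety c t q) ((1 - t) * ρ) ⊆ Q := by
  intro y hy
  have ht : 0 < 1 - t := by linarith
  set z := c + (1 - t)⁻¹ • (y - AffineMap.homothety c t q)
  have hz : z ∈ Q := by
    refine hball ?_
    rw [mem_ball, dist_eq_norm, add_sub_cancel_left, norm_smul, norm_inv, Real.norm_of_nonneg ht.le,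
      inv_mul_lt_iff₀ ht, ← dist_eq_norm]
    exact hy
  have hy : y = AffineMap.lineMap q z (1 - t) := by
    simp only [z, AffineMap.lineMap_apply, AffineMap.homothety_apply, vsub_eq_sub, vadd_eq_add]
    match_scalars <;> field_simp <;> ring
  exact hy ▸ hQ.lineMap_mem hq hz ⟨ht.le, by linarith⟩

lemma tendsto_volume_sdiff_homothety_image {n : ℕ} {Q : Set (Euc n)} (hQc : IsCompact Q)
    (hQ : Convex ℝ Q) {c : Euc n} (hc : c ∈ Q) :
    Tendsto (fun t : ℝ => volume (Q \ AffineMap.homothety c t '' Q)) (𝓝[<] 1) (𝓝 0) := by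
  have hvol : ∀ t ∈ Ioo (0 : ℝ) 1,
      ENNReal.ofReal (1 - t ^ n) * volume Q = volume (Q \ AffineMap.homothety c t '' Q) := by
    rintro t ⟨ht0, ht1⟩
    have hsub : AffineMap.homothety c t '' Q ⊆ Q := by
      rintro _ ⟨q, hq, rfl⟩
      rw [AffineMap.homothety_eq_lineMap]
      exact hQ.lineMap_mem hc hq ⟨ht0.le, ht1.le⟩
    rw [measure_sdiff hsub
      (hQc.image (AffineMap.homothety_continuous c t)).isClosed.measurableSet.nullMeasurableSet
      (measure_ne_top_of_subset hsub hQc.measure_ne_top), Measure.addHaar_image_homothety,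
      finrank_euclideanSpace_fin, abs_of_pos (pow_pos ht0 n),
      ENNReal.ofReal_sub _ (pow_nonneg ht0.le n), ENNReal.ofReal_one,
      ENNReal.sub_mul fun _ _ => hQc.measure_ne_top, one_mul]
  have hlim : Tendsto (fun t : ℝ => 1 - t ^ n) (𝓝[<] 1) (𝓝 0) :=
    ((continuous_const.sub (continuous_pow n)).tendsto' 1 0 (by simp)).mono_left
      nhdsWithin_le_nhds
  have := ENNReal.Tendsto.mul_const (ENNReal.tendsto_ofReal hlim)
    (Or.inr (hQc.measure_ne_top (μ := volume)))
  rw [ENNReal.ofReal_zero, zero_mul] at this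
  exact this.congr' (eventually_of_mem (Ioo_mem_nhdsLT zero_lt_one) hvol)

lemma tendsto_measure_cthickening_sdiff {α : Type*} [MetricSpace α] [MeasurableSpace α]
    [OpensMeasurableSpace α] [ProperSpace α] {μ : Measure α} [IsFiniteMeasureOnCompacts μ]
    {s : Set α} (hs : IsCompact s) :
    Tendsto (fun r => μ (cthickening r s \ s)) (𝓝 0) (𝓝 0) := by
  have := ENNReal.Tendsto.sub (tendsto_measure_cthickening_of_isCompact (μ := μ) hs)
    tendsto_const_nhds (Or.inr (hs.measure_ne_top (μ := μ)))
  rw [tsub_self] at this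
  exact this.congr fun r => (measure_sdiff (self_subset_cthickening s)
    hs.isClosed.measurableSet.nullMeasurableSet hs.measure_ne_top).symm

section ConvexBody

variable {n : ℕ} {C : Set (Euc n)}

lemma unifMeasure_apply (C : Set (Euc n)) {s : Set (Euc n)} (hs : MeasurableSet s) :
    unifMeasure C s = (volume C)⁻¹ * volume (s ∩ C) := by
  rw [unifMeasure, Measure.smul_apply, Measure.restrict_apply hs, smul_eq_mul]

lemma ae_unifMeasure_mem (hC : MeasurableSet C) : ∀ᵐ x ∂unifMeasure C, x ∈ C :=
  Measure.ae_smul_measure (ae_restrict_mem hC) _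

namespace IsConvexBody

lemma measurableSet (h : IsConvexBody C) : MeasurableSet C :=
  h.2.1.isClosed.measurableSet

lemma volume_pos (h : IsConvexBody C) : 0 < volume C :=
  Measure.measure_pos_of_nonempty_interior _ h.2.2

lemma volume_ne_top (h : IsConvexBody C) : volume C ≠ ∞ :=
  h.2.1.measure_ne_top

lemma isProbabilityMeasure_unifMeasure (h : IsConvexBody C) :
    IsProbabilityMeasure (unifMeasure C) :=
  ⟨by rw [unifMeasure_apply C MeasurableSet.univ, univ_inter,
    ENNReal.inv_mul_cancel h.volume_pos.ne' h.volume_ne_top]⟩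

end IsConvexBody

end ConvexBody

section CouplingOfConvexBodies

variable {n : ℕ} {P Q : Set (Euc n)} {ξ : Measure (Euc n × Euc n)}
  (hP : IsConvexBody P) (hQ : IsConvexBody Q) (hξ : IsCoupling ξ (unifMeasure P) (unifMeasure Q))
include hP hQ hξ

lemma IsCoupling.sq_mul_measureReal_le_sqDistCost {A : Set (Euc n × Euc n)} {d : ℝ}
    (hd : 0 ≤ d) (hA : ∀ z ∈ A, z.1 ∈ P → z.2 ∈ Q → d ≤ dist z.1 z.2) :
    d ^ 2 * ξ.real A ≤ sqDistCost ξ := by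
  have := hP.isProbabilityMeasure_unifMeasure
  have := hξ.isProbabilityMeasure
  have hmem : ∀ᵐ z ∂ξ, z ∈ P ×ˢ Q :=
    (hξ.ae_fst (ae_unifMeasure_mem hP.measurableSet)).and
      (hξ.ae_snd (ae_unifMeasure_mem hQ.measurableSet))
  exact _root_.sq_mul_measureReal_le_sqDistCost
    (integrable_dist_sq_of_ae_mem hP.2.1.isBounded hQ.2.1.isBounded hmem) hd
    (hmem.mono fun z hz hzA => hA z hzA hz.1 hz.2)

lemma volume_sdiff_cthickening_mul_le {r : ℝ} (hr : 0 ≤ r) :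
    (volume (P \ cthickening r Q)).toReal * r ^ 2 ≤ (volume P).toReal * sqDistCost ξ := by
  have hT : MeasurableSet (cthickening r Q)ᶜ := isClosed_cthickening.measurableSet.compl
  have hfar (z) (hz : z ∈ (cthickening r Q)ᶜ ×ˢ univ) (_ : z.1 ∈ P) (hz2 : z.2 ∈ Q) :
      r ≤ dist z.1 z.2 :=
    le_of_not_ge fun h => hz.1 (mem_cthickening_of_dist_le _ _ _ _ hz2 h)
  have hmarkov := hξ.sq_mul_measureReal_le_sqDistCost hP hQ hr hfar
  rw [measureReal_def, hξ.apply_prod_univ hT, unifMeasure_apply P hT, inter_comm, ← sdiff_eq,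
    ENNReal.toReal_mul, ENNReal.toReal_inv, inv_mul_eq_div, mul_div_assoc',
    div_le_iff₀ (ENNReal.toReal_pos hP.volume_pos.ne' hP.volume_ne_top)] at hmarkov
  linarith

lemma volume_sdiff_cthickening_le {r : ℝ} (hr : 0 < r) (hcost : sqDistCost ξ ≤ r ^ 2 / 2) :
    (volume (P \ cthickening r Q)).toReal ≤
      2 * (volume (cthickening r Q)).toReal * sqDistCost ξ / r ^ 2 := by
  have hmarkov := volume_sdiff_cthickening_mul_le hP hQ hξ hr.le
  set T := cthickening r Q
  have hsplit : (volume (P ∩ T)).toReal + (volume (P \ T)).toReal = (volume P).toReal := by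
    rw [← ENNReal.toReal_add (measure_ne_top_of_subset inter_subset_left hP.volume_ne_top)
      (measure_ne_top_of_subset sdiff_subset hP.volume_ne_top),
      measure_inter_add_sdiff P isClosed_cthickening.measurableSet]
  have hinter : (volume (P ∩ T)).toReal ≤ (volume T).toReal :=
    ENNReal.toReal_mono hQ.2.1.isBounded.cthickening.measure_lt_top.ne
      (measure_mono inter_subset_right)
  have hc := sqDistCost_nonneg ξ
  -- `cost ≤ r² / 2` leaves at most half of `P` outside `T`, so `vol P ≤ 2 vol T`.
  have hhalf : (volume (P \ T)).toReal ≤ (volume (P ∩ T)).toReal := by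
    nlinarith [mul_le_mul_of_nonneg_left hcost (hsplit ▸ ENNReal.toReal_nonneg :
      0 ≤ (volume (P ∩ T)).toReal + (volume (P \ T)).toReal), pow_pos hr 2]
  rw [le_div_iff₀ (by positivity)]
  nlinarith [mul_le_mul_of_nonneg_right hhalf hc, mul_le_mul_of_nonneg_right hinter hc]

lemma mem_of_ball_subset_of_sqDistCost_lt {x : Euc n} {δ : ℝ} (hδ : 0 < δ)
    (hx : ball x δ ⊆ Q) (hcost : sqDistCost ξ <
      (δ / 4) ^ 2 * (volume (ball (0 : Euc n) (δ / 4))).toReal / (volume Q).toReal) :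
    x ∈ P := by
  by_contra hxP
  obtain ⟨u, hu, hsep⟩ := exists_norm_eq_one_inner_le_of_notMem hP.1 hP.2.1.isClosed
    (hP.2.2.mono interior_subset) hxP
  set c := x + (δ / 2) • u
  have hSQ : ball c (δ / 4) ⊆ Q := by
    refine (ball_subset_ball' ?_).trans hx
    rw [dist_eq_norm, add_sub_cancel_left, norm_smul, hu, Real.norm_of_nonneg (by positivity)]
    linarith
  have hfar (z) (hz : z ∈ univ ×ˢ ball c (δ / 4)) (hp : z.1 ∈ P) (_ : z.2 ∈ Q) :
      δ / 4 ≤ dist z.1 z.2 := by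
    obtain ⟨p, y⟩ := z
    have hy : y ∈ ball c (δ / 4) := hz.2
    have hyc : |⟪u, y - c⟫| < δ / 4 :=
      (abs_real_inner_le_norm u _).trans_lt (by rwa [hu, one_mul, ← dist_eq_norm])
    have hyp : ⟪u, y - p⟫ = ⟪u, y - c⟫ + δ / 2 + (⟪u, x⟫ - ⟪u, p⟫) := by
      have : y - p = (y - c) + (δ / 2) • u + (x - p) := by simp only [c]; abel
      rw [this, inner_add_right, inner_add_right, inner_sub_right (y := x), real_inner_smul_right,
        real_inner_self_eq_norm_sq, hu]
      ring
    calc δ / 4 ≤ ⟪u, y - p⟫ := by linarith [(abs_lt.1 hyc).1, hsep p hp]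
      _ ≤ ‖u‖ * ‖y - p‖ := real_inner_le_norm _ _
      _ = dist p y := by rw [hu, one_mul, dist_comm, dist_eq_norm]
  have hmarkov := hξ.sq_mul_measureReal_le_sqDistCost hP hQ (by positivity) hfar
  rw [measureReal_def, hξ.apply_univ_prod measurableSet_ball,
    unifMeasure_apply Q measurableSet_ball, inter_eq_self_of_subset_left hSQ,
    Measure.addHaar_ball_center, ENNReal.toReal_mul, ENNReal.toReal_inv, inv_mul_eq_div,
    ← mul_div_assoc] at hmarkov
  linarith

end CouplingOfConvexBodies

section ConvergentCouplings

variable {n : ℕ} {P : ℕ → Set (Euc n)} {Q : Set (Euc n)}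
  {ξ : ℕ → Measure (Euc n × Euc n)} (hP : ∀ i, IsConvexBody (P i)) (hQ : IsConvexBody Q)
  (hξ : ∀ i, IsCoupling (ξ i) (unifMeasure (P i)) (unifMeasure Q))
  (hcost : Tendsto (fun i => sqDistCost (ξ i)) atTop (𝓝 0))
include hP hQ hξ hcost

lemma eventually_homothety_image_subset {c : Euc n} {ρ t : ℝ} (hρ : 0 < ρ)
    (hball : ball c ρ ⊆ Q) (ht0 : 0 ≤ t) (ht1 : t < 1) :
    ∀ᶠ i in atTop, AffineMap.homothety c t '' Q ⊆ P i := by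
  set δ := (1 - t) * ρ
  have hδ : 0 < δ := mul_pos (by linarith) hρ
  have hball_pos := ENNReal.toReal_pos
    (measure_ball_pos volume (0 : Euc n) (by positivity : 0 < δ / 4)).ne' measure_ball_lt_top.ne
  have hQ_pos := ENNReal.toReal_pos hQ.volume_pos.ne' hQ.volume_ne_top
  filter_upwards [hcost.eventually_lt_const (by positivity :
    0 < (δ / 4) ^ 2 * (volume (ball (0 : Euc n) (δ / 4))).toReal / (volume Q).toReal)] with i hi
  rintro _ ⟨q, hq, rfl⟩
  exact mem_of_ball_subset_of_sqDistCost_lt (hP i) hQ (hξ i) hδ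
    (hQ.1.ball_homothety_subset hball hq ht0 ht1) hi

lemma tendsto_volume_limit_sdiff : Tendsto (fun i => volume (Q \ P i)) atTop (𝓝 0) := by
  obtain ⟨c, hc⟩ := hQ.2.2
  obtain ⟨ρ, hρ, hball⟩ := Metric.mem_nhds_iff.1 (mem_interior_iff_mem_nhds.1 hc)
  refine ENNReal.tendsto_nhds_zero.2 fun ε hε => ?_
  have hshrink := tendsto_volume_sdiff_homothety_image hQ.2.1 hQ.1 (interior_subset hc)
  obtain ⟨t, htε, ht⟩ :=
    ((hshrink.eventually (ge_mem_nhds hε)).and (Ioo_mem_nhdsLT zero_lt_one)).exists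
  filter_upwards [eventually_homothety_image_subset hP hQ hξ hcost hρ hball ht.1.le ht.2]
    with i hi
  exact (measure_mono (sdiff_subset_sdiff_right hi)).trans htε

lemma tendsto_volume_sdiff_cthickening {r : ℝ} (hr : 0 < r) :
    Tendsto (fun i => volume (P i \ cthickening r Q)) atTop (𝓝 0) := by
  have hfin i : volume (P i \ cthickening r Q) ≠ ∞ :=
    measure_ne_top_of_subset sdiff_subset (hP i).volume_ne_top
  rw [← ENNReal.tendsto_toReal_iff hfin ENNReal.zero_ne_top, ENNReal.toReal_zero]
  have hbound := (hcost.const_mul (2 * (volume (cthickening r Q)).toReal)).div_const (r ^ 2)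
  rw [mul_zero, zero_div] at hbound
  refine squeeze_zero' (Eventually.of_forall fun i => ENNReal.toReal_nonneg) ?_ hbound
  filter_upwards [hcost.eventually_le_const (by positivity : (0 : ℝ) < r ^ 2 / 2)] with i hi
  exact volume_sdiff_cthickening_le (hP i) hQ (hξ i) hr hi

lemma tendsto_volume_sdiff_limit : Tendsto (fun i => volume (P i \ Q)) atTop (𝓝 0) := by
  refine ENNReal.tendsto_nhds_zero.2 fun ε hε => ?_
  have hε2 : 0 < ε / 2 := ENNReal.half_pos hε.ne'
  have hthick := (tendsto_measure_cthickening_sdiff (μ := volume) hQ.2.1).mono_left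
    (nhdsWithin_le_nhds (s := Ioi 0))
  obtain ⟨r, hrε, hr⟩ :=
    ((hthick.eventually (ge_mem_nhds hε2)).and self_mem_nhdsWithin).exists
  filter_upwards [ENNReal.tendsto_nhds_zero.1
    (tendsto_volume_sdiff_cthickening hP hQ hξ hcost hr) _ hε2] with i hi
  calc volume (P i \ Q) ≤ volume (P i \ cthickening r Q ∪ cthickening r Q \ Q) :=
        measure_mono (sdiff_triangle _ _ _)
    _ ≤ ε / 2 + ε / 2 := (measure_union_le _ _).trans (add_le_add hi hrε)
    _ = ε := ENNReal.add_halves ε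

end ConvergentCouplings

/-- If `W₂(m_{P_i}, m_Q) → 0` for convex bodies `P i` and `Q`, then
`vol(P_i △ Q) → 0`. -/
theorem stmt3 (n : ℕ) (P : ℕ → Set (Euc n)) (Q : Set (Euc n))
    (hP : ∀ i, IsConvexBody (P i)) (hQ : IsConvexBody Q)
    (h : Tendsto (fun i => W2 (unifMeasure (P i)) (unifMeasure Q)) atTop (𝓝 0)) :
    Tendsto (fun i => (volume (symmDiff (P i) Q)).toReal) atTop (𝓝 0) := by
  have := fun i => (hP i).isProbabilityMeasure_unifMeasure
  have := hQ.isProbabilityMeasure_unifMeasure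
  obtain ⟨ξ, hξ, hcost⟩ := exists_isCoupling_tendsto_sqDistCost h
  have hsum := (tendsto_volume_sdiff_limit hP hQ hξ hcost).add
    (tendsto_volume_limit_sdiff hP hQ hξ hcost)
  rw [add_zero] at hsum
  have hsymm : Tendsto (fun i => volume (symmDiff (P i) Q)) atTop (𝓝 0) :=
    tendsto_of_tendsto_of_tendsto_of_le_of_le tendsto_const_nhds hsum (fun _ => zero_le)
      fun i => measure_union_le _ _
  rw [← ENNReal.toReal_zero]
  exact (ENNReal.tendsto_toReal ENNReal.zero_ne_top).comp hsymm
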